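/- Let H₁, H₂ ∈ (1/2, 1) and set c_{a,h} = a^{−h/2} Γ(h/2). For a > 0 define g_a : ℝ → ℝ by g_a(x) = ∫₀¹ ( c_{a,H₂} (s − x)₊^{H₁/2 − 1} + c_{a,H₁} (s − x)₊^{H₂/2 − 1} ) e^{a s} ds. Then the family (g_a)_{a > 0} is linearly independent in the real vector space of functions ℝ → ℝ; in particular, for every n the functions g_{a₁}, …, g_{a_n} with distinct a₁, …, a_n > 0 span an n-dimensional subspace. (Consequently, the integral operator with kernel φ(x,y) = ∫₀¹ K_{H₁,H₂}(s,x,y) ds has infinite-dimensional range.) -/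

import Mathlib

open MeasureTheory

/-- `u₊^p`: equals `u ^ p` (real power) if `u > 0`, and `0` otherwise. -/
noncomputable def plusPow (u p : ℝ) : ℝ := if 0 < u then u ^ p else 0

/-- `c_{a,h} = a^{-h/2} Γ(h/2)`. -/
noncomputable def cahConst (a h : ℝ) : ℝ := a ^ (-(h / 2)) * Real.Gamma (h / 2)

/-- `g_a(x) = ∫₀¹ (c_{a,H₂} (s−x)₊^{H₁/2−1} + c_{a,H₁} (s−x)₊^{H₂/2−1}) e^{as} ds`,
the image of `f_a(y) = e^{ay} 𝟙{y≤1}` under the integral operator with kernel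
`φ(x,y) = ∫₀¹ K_{H₁,H₂}(s,x,y) ds`. -/
noncomputable def gFun (H₁ H₂ a x : ℝ) : ℝ :=
  ∫ s in (0:ℝ)..1,
    (cahConst a H₂ * plusPow (s - x) (H₁ / 2 - 1) +
     cahConst a H₁ * plusPow (s - x) (H₂ / 2 - 1)) * Real.exp (a * s)


/-!
For `0 ≤ x ≤ 1` only `s > x` contributes to `g_a(x)`, so `g_a(x) = e^a h_a(1 - x)` with
`h_a(u) = e^{-au} ∫₀ᵘ ψ_a(t) e^{at} dt`, which satisfies `h_a' = ψ_a - a h_a` and `h_a(0⁺) = 0`.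
If `∑ wᵢ h_{aᵢ}` vanishes on `(0,1)`, differentiating gives `∑ wᵢ aᵢ h_{aᵢ} = ∑ wᵢ ψ_{aᵢ}`. The left
side tends to `0` at `0⁺`, while the right side is `A u^{H₁/2-1} + B u^{H₂/2-1}` with negative
exponents, so both sides vanish identically. Iterating, `∑ wᵢ aᵢᵏ ψ_{aᵢ}(1) = 0` for every `k`,
and since the `aᵢ` are distinct and `ψ_a(1) > 0`, a Vandermonde argument forces `w = 0`.
-/

open Filter Set Topology Real

noncomputable def gKernel (H₁ H₂ a t : ℝ) : ℝ :=
  cahConst a H₂ * t ^ (H₁ / 2 - 1) + cahConst a H₁ * t ^ (H₂ / 2 - 1)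

noncomputable def gReflect (H₁ H₂ a u : ℝ) : ℝ :=
  exp (-(a * u)) * ∫ t in (0:ℝ)..u, gKernel H₁ H₂ a t * exp (a * t)

section Analysis

variable {H₁ H₂ : ℝ}

theorem gFun_eq_exp_mul_gReflect (a : ℝ) {x : ℝ} (hx : x ∈ Icc (0:ℝ) 1) :
    gFun H₁ H₂ a x = exp a * gReflect H₁ H₂ a (1 - x) := by
  set k : ℝ → ℝ := fun t =>
    (cahConst a H₂ * plusPow t (H₁ / 2 - 1) + cahConst a H₁ * plusPow t (H₂ / 2 - 1)) *
      exp (a * t)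
  have hshift : gFun H₁ H₂ a x = exp (a * x) * ∫ t in -x..1 - x, k t := by
    rw [← intervalIntegral.integral_const_mul, ← zero_sub,
      ← intervalIntegral.integral_comp_sub_right]
    refine intervalIntegral.integral_congr fun s _ => ?_
    simp only [k, mul_left_comm (exp (a * x)), ← exp_add]
    ring_nf
  have htrunc : ∫ t in -x..1 - x, k t = ∫ t in (0:ℝ)..1 - x, gKernel H₁ H₂ a t * exp (a * t) := by
    rw [intervalIntegral.integral_of_le (by linarith [hx.1]),
      intervalIntegral.integral_of_le (by linarith [hx.2]),
      setIntegral_eq_of_subset_of_forall_sdiff_eq_zero measurableSet_Ioc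
        (Ioc_subset_Ioc_left (show -x ≤ 0 by linarith [hx.1]))]
    · refine setIntegral_congr_fun measurableSet_Ioc fun t ht => ?_
      simp [k, gKernel, plusPow, ht.1]
    · intro t ht
      have : ¬ 0 < t := fun h => ht.2 ⟨h, ht.1.2⟩
      simp [k, plusPow, this]
  rw [hshift, htrunc, gReflect, ← mul_assoc, ← exp_add]
  ring_nf

theorem intervalIntegrable_gKernel_mul_exp (hH₁ : 0 < H₁) (hH₂ : 0 < H₂) (a u v : ℝ) :
    IntervalIntegrable (fun t => gKernel H₁ H₂ a t * exp (a * t)) volume u v := by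
  have hrpow : ∀ {H : ℝ}, 0 < H → IntervalIntegrable (fun t : ℝ => t ^ (H / 2 - 1)) volume u v :=
    fun hH => intervalIntegral.intervalIntegrable_rpow' (by linarith)
  exact (((hrpow hH₁).const_mul _).add ((hrpow hH₂).const_mul _)).mul_continuousOn
    (by fun_prop)

theorem tendsto_gReflect_nhdsGT_zero (hH₁ : 0 < H₁) (hH₂ : 0 < H₂) (a : ℝ) :
    Tendsto (gReflect H₁ H₂ a) (𝓝[>] 0) (𝓝 0) := by
  have hcont : Continuous (gReflect H₁ H₂ a) :=
    (by fun_prop : Continuous fun u => exp (-(a * u))).mul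
      (intervalIntegral.continuous_primitive (intervalIntegrable_gKernel_mul_exp hH₁ hH₂ a) 0)
  simpa [gReflect] using (hcont.tendsto 0).mono_left nhdsWithin_le_nhds

theorem hasDerivAt_gReflect (hH₁ : 0 < H₁) (hH₂ : 0 < H₂) (a : ℝ) {u : ℝ} (hu : 0 < u) :
    HasDerivAt (gReflect H₁ H₂ a) (gKernel H₁ H₂ a u - a * gReflect H₁ H₂ a u) u := by
  have hcont : ∀ t ∈ Ioi (0:ℝ), ContinuousAt (fun t => gKernel H₁ H₂ a t * exp (a * t)) t := by
    intro t ht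
    have hrpow : ∀ r : ℝ, ContinuousAt (fun t : ℝ => t ^ r) t :=
      fun r => continuousAt_id.rpow_const (Or.inl (mem_Ioi.1 ht).ne')
    unfold gKernel
    fun_prop
  have hprim := intervalIntegral.integral_hasDerivAt_right
    (intervalIntegrable_gKernel_mul_exp hH₁ hH₂ a 0 u)
    (ContinuousAt.stronglyMeasurableAtFilter isOpen_Ioi hcont u hu) (hcont u hu)
  have hexp : HasDerivAt (fun u => exp (-(a * u))) (exp (-(a * u)) * -a) u := by
    simpa using ((hasDerivAt_id u).const_mul a).neg.exp
  have hinv : exp (-(a * u)) * exp (a * u) = 1 := by rw [← exp_add, neg_add_cancel, exp_zero]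
  refine (hexp.mul hprim).congr_deriv ?_
  rw [gReflect]
  linear_combination gKernel H₁ H₂ a u * hinv

end Analysis

section PowerAsymptotics

variable {p q A B : ℝ}

theorem tendsto_rpow_nhdsGT_zero {r : ℝ} (hr : 0 < r) :
    Tendsto (fun ε : ℝ => ε ^ r) (𝓝[>] 0) (𝓝 0) := by
  simpa [zero_rpow hr.ne'] using
    ((continuousAt_id (x := (0:ℝ))).rpow_const (p := r) (Or.inr hr.le)).tendsto.mono_left
      nhdsWithin_le_nhds

theorem tendsto_mul_rpow_add_mul_rpow_shift {r : ℝ} (hr : 0 < r)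
    (h : Tendsto (fun ε : ℝ => A * ε ^ p + B * ε ^ q) (𝓝[>] 0) (𝓝 0)) :
    Tendsto (fun ε : ℝ => A * ε ^ (p + r) + B * ε ^ (q + r)) (𝓝[>] 0) (𝓝 0) := by
  have hprod : Tendsto (fun ε : ℝ => ε ^ r * (A * ε ^ p + B * ε ^ q)) (𝓝[>] 0) (𝓝 0) := by
    simpa using (tendsto_rpow_nhdsGT_zero hr).mul h
  refine hprod.congr' ?_
  filter_upwards [self_mem_nhdsWithin] with ε (hε : 0 < ε)
  rw [rpow_add hε, rpow_add hε]
  ring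

theorem mul_rpow_add_mul_rpow_eq_zero_of_tendsto (hp : p < 0) (hq : q < 0)
    (h : Tendsto (fun ε : ℝ => A * ε ^ p + B * ε ^ q) (𝓝[>] 0) (𝓝 0)) (ε : ℝ) :
    A * ε ^ p + B * ε ^ q = 0 := by
  wlog hqp : q ≤ p generalizing p q A B
  · rw [add_comm]
    exact this hq hp (by simpa only [add_comm] using h) (le_of_not_ge hqp)
  have hscaled := tendsto_mul_rpow_add_mul_rpow_shift (neg_pos.2 hq) h
  rw [add_neg_cancel, ← sub_eq_add_neg] at hscaled
  rcases hqp.eq_or_lt with rfl | hlt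
  · have hAB : A + B = 0 := tendsto_nhds_unique (by simp) hscaled
    rw [← add_mul, hAB, zero_mul]
  · have hB : B = 0 := by
      refine tendsto_nhds_unique ?_ hscaled
      simpa using ((tendsto_rpow_nhdsGT_zero (sub_pos.2 hlt)).const_mul A).add_const B
    subst hB
    have hA : A = 0 := by
      refine tendsto_nhds_unique ?_ (tendsto_mul_rpow_add_mul_rpow_shift (neg_pos.2 hp) h)
      simp
    simp [hA]

end PowerAsymptotics

section Recurrence

variable {H₁ H₂ : ℝ} {ι : Type*} {s : Finset ι} {a w : ι → ℝ}

theorem sum_mul_mul_gReflect_eq_sum_mul_gKernel (hH₁ : 0 < H₁) (hH₂ : 0 < H₂)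
    (h : ∀ u ∈ Ioo (0:ℝ) 1, ∑ i ∈ s, w i * gReflect H₁ H₂ (a i) u = 0)
    {u : ℝ} (hu : u ∈ Ioo (0:ℝ) 1) :
    ∑ i ∈ s, w i * a i * gReflect H₁ H₂ (a i) u = ∑ i ∈ s, w i * gKernel H₁ H₂ (a i) u := by
  have hderiv : HasDerivAt (fun v => ∑ i ∈ s, w i * gReflect H₁ H₂ (a i) v)
      (∑ i ∈ s, w i * (gKernel H₁ H₂ (a i) u - a i * gReflect H₁ H₂ (a i) u)) u :=
    HasDerivAt.fun_sum fun i _ => (hasDerivAt_gReflect hH₁ hH₂ (a i) hu.1).const_mul (w i)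
  have hzero : HasDerivAt (fun v => ∑ i ∈ s, w i * gReflect H₁ H₂ (a i) v) 0 u :=
    (hasDerivAt_const u 0).congr_of_eventuallyEq
      (eventually_of_mem (Ioo_mem_nhds hu.1 hu.2) h)
  have hsum := hderiv.unique hzero
  simp only [mul_sub, Finset.sum_sub_distrib, sub_eq_zero] at hsum
  simp only [hsum, mul_assoc]

theorem sum_mul_gKernel_eq_zero (hH₁ : H₁ ∈ Ioo 0 2) (hH₂ : H₂ ∈ Ioo 0 2)
    (h : ∀ u ∈ Ioo (0:ℝ) 1, ∑ i ∈ s, w i * gReflect H₁ H₂ (a i) u = 0) (u : ℝ) :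
    ∑ i ∈ s, w i * gKernel H₁ H₂ (a i) u = 0 := by
  have hpower : ∀ u, ∑ i ∈ s, w i * gKernel H₁ H₂ (a i) u =
      (∑ i ∈ s, w i * cahConst (a i) H₂) * u ^ (H₁ / 2 - 1) +
        (∑ i ∈ s, w i * cahConst (a i) H₁) * u ^ (H₂ / 2 - 1) := by
    intro u
    simp only [gKernel, mul_add, Finset.sum_add_distrib, Finset.sum_mul, mul_assoc]
  rw [hpower]
  refine mul_rpow_add_mul_rpow_eq_zero_of_tendsto (by linarith [hH₁.2]) (by linarith [hH₂.2])
    ?_ u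
  have hlim : Tendsto (fun u => ∑ i ∈ s, w i * a i * gReflect H₁ H₂ (a i) u) (𝓝[>] 0) (𝓝 0) := by
    simpa using tendsto_finsetSum s fun i _ =>
      (tendsto_gReflect_nhdsGT_zero hH₁.1 hH₂.1 (a i)).const_mul (w i * a i)
  refine hlim.congr' ?_
  filter_upwards [Ioo_mem_nhdsGT one_pos] with u hu
  rw [sum_mul_mul_gReflect_eq_sum_mul_gKernel hH₁.1 hH₂.1 h hu, hpower]

theorem sum_mul_pow_mul_gKernel_eq_zero (hH₁ : H₁ ∈ Ioo 0 2) (hH₂ : H₂ ∈ Ioo 0 2)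
    (h : ∀ u ∈ Ioo (0:ℝ) 1, ∑ i ∈ s, w i * gReflect H₁ H₂ (a i) u = 0) (k : ℕ) (u : ℝ) :
    ∑ i ∈ s, w i * a i ^ k * gKernel H₁ H₂ (a i) u = 0 := by
  have hiter : ∀ k : ℕ, ∀ u ∈ Ioo (0:ℝ) 1,
      ∑ i ∈ s, w i * a i ^ k * gReflect H₁ H₂ (a i) u = 0 := by
    intro k
    induction k with
    | zero => simpa using h
    | succ k ih =>
      intro u hu
      simp only [pow_succ, ← mul_assoc]
      rw [sum_mul_mul_gReflect_eq_sum_mul_gKernel hH₁.1 hH₂.1 ih hu]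
      exact sum_mul_gKernel_eq_zero hH₁ hH₂ ih u
  exact sum_mul_gKernel_eq_zero hH₁ hH₂ (hiter k) u

end Recurrence

theorem eq_zero_of_forall_sum_mul_pow_eq_zero {K ι : Type*} [Field K] {s : Finset ι}
    {v c : ι → K} (hv : InjOn v s) (h : ∀ k : ℕ, ∑ i ∈ s, c i * v i ^ k = 0) {j : ι}
    (hj : j ∈ s) : c j = 0 := by
  classical
  have heval : ∀ p : Polynomial K, ∑ i ∈ s, c i * p.eval (v i) = 0 := by
    intro p
    simp_rw [Polynomial.eval_eq_sum_range, Finset.mul_sum]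
    rw [Finset.sum_comm]
    refine Finset.sum_eq_zero fun n _ => ?_
    simp_rw [mul_left_comm (c _)]
    rw [← Finset.mul_sum, h, mul_zero]
  have hbasis := heval (Lagrange.basis s v j)
  rwa [Finset.sum_eq_single j (fun i hi hij => by rw [Lagrange.eval_basis_of_ne hij.symm hi, mul_zero])
    (fun hj' => absurd hj hj'), Lagrange.eval_basis_self hv hj, mul_one] at hbasis

theorem gKernel_pos {H₁ H₂ a t : ℝ} (hH₁ : 0 < H₁) (hH₂ : 0 < H₂) (ha : 0 < a) (ht : 0 < t) :
    0 < gKernel H₁ H₂ a t := by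
  have hc : ∀ {H : ℝ}, 0 < H → 0 < cahConst a H :=
    fun hH => mul_pos (rpow_pos_of_pos ha _) (Gamma_pos_of_pos (by linarith))
  exact add_pos (mul_pos (hc hH₂) (rpow_pos_of_pos ht _)) (mul_pos (hc hH₁) (rpow_pos_of_pos ht _))

/-- The family `(g_a)_{a > 0}` is linearly independent in the space of functions `ℝ → ℝ`;
in particular, finitely many of them with distinct parameters span a subspace of full
dimension. -/
theorem gFun_linearIndependent (H₁ H₂ : ℝ) (hH₁ : H₁ ∈ Set.Ioo (1/2 : ℝ) 1)
    (hH₂ : H₂ ∈ Set.Ioo (1/2 : ℝ) 1) :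
    LinearIndependent ℝ (fun a : Set.Ioi (0:ℝ) => gFun H₁ H₂ (a : ℝ)) := by
  have hH₁' : H₁ ∈ Ioo (0:ℝ) 2 := ⟨by linarith [hH₁.1], by linarith [hH₁.2]⟩
  have hH₂' : H₂ ∈ Ioo (0:ℝ) 2 := ⟨by linarith [hH₂.1], by linarith [hH₂.2]⟩
  rw [linearIndependent_iff']
  intro s l hrel b hb
  have hreflect : ∀ u ∈ Ioo (0:ℝ) 1, ∑ i ∈ s, l i * exp i * gReflect H₁ H₂ i u = 0 := by
    intro u hu
    have hx : 1 - u ∈ Icc (0:ℝ) 1 := ⟨by linarith [hu.2], by linarith [hu.1]⟩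
    have := congrFun hrel (1 - u)
    simp only [Finset.sum_apply, Pi.smul_apply, smul_eq_mul, Pi.zero_apply,
      gFun_eq_exp_mul_gReflect _ hx, sub_sub_cancel] at this
    simpa only [mul_assoc] using this
  have hmoments : ∀ k : ℕ, ∑ i ∈ s, (l i * exp i * gKernel H₁ H₂ i 1) * (i:ℝ) ^ k = 0 := by
    intro k
    refine (Finset.sum_congr rfl fun i _ => by ring).trans
      (sum_mul_pow_mul_gKernel_eq_zero hH₁' hH₂' hreflect k 1)
  have hzero := eq_zero_of_forall_sum_mul_pow_eq_zero Subtype.val_injective.injOn hmoments hb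
  have hpos := gKernel_pos hH₁'.1 hH₂'.1 b.2 one_pos
  simpa [(exp_pos _).ne', hpos.ne'] using hzero
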